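/- arXiv:2405.02923 — 9 statements merged into one kernel-verified Lean document; each statement's English description precedes it below -/
import Mathlib

section
/- Let F_q be a finite field, s a positive integer, and γ ∈ F_q with γ(γ-1)(γ+s-1)(γ+s-2) ≠ 0. Define F0 = x^{s-1}+⋯+x+γ and F1 = (x^{s-1}+⋯+x-(γ+s-2)) / (-(γ-1)(γ+s-1)) in F_q[x]/(x^s-1). Then F0·F1 = 1 in F_q[x]/(x^s-1). -/
/-!
Write `g = 1 + x + ⋯ + x^{s-1}` in `F[x]/(x^s - 1)`. Since `g x = g`, also `g² = s g`,
so `F0 = g + (γ - 1)` and `F1 · (-(γ-1)(γ+s-1)) = g - (γ + s - 1)` multiply to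
`g² - s g - (γ-1)(γ+s-1) = -(γ-1)(γ+s-1)`.
-/

open Polynomial Finset

section GeomSum

variable {R : Type*} [CommRing R] {x : R} {s : ℕ}

theorem geom_sum_mul_pow_of_pow_eq_one (hx : x ^ s = 1) (i : ℕ) :
    (∑ j ∈ range s, x ^ j) * x ^ i = ∑ j ∈ range s, x ^ j := by
  have hmul : (∑ j ∈ range s, x ^ j) * x = ∑ j ∈ range s, x ^ j := by
    linear_combination geom_sum_mul x s + hx
  induction i with
  | zero => rw [pow_zero, mul_one]
  | succ n ih => rw [pow_succ, ← mul_assoc, ih, hmul]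

theorem geom_sum_mul_self_of_pow_eq_one (hx : x ^ s = 1) :
    (∑ j ∈ range s, x ^ j) * (∑ j ∈ range s, x ^ j) = s * ∑ j ∈ range s, x ^ j := by
  rw [mul_sum, sum_congr rfl fun i _ => geom_sum_mul_pow_of_pow_eq_one hx i, sum_const,
    card_range, nsmul_eq_mul]

theorem sum_Ico_one_pow (hs : 0 < s) (x : R) :
    ∑ i ∈ Ico 1 s, x ^ i = ∑ i ∈ range s, x ^ i - 1 := by
  rw [range_eq_Ico, sum_eq_sum_Ico_succ_bot hs, pow_zero, add_sub_cancel_left]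

end GeomSum

theorem mul_inv_geom_sum_of_pow_eq_one {F A : Type*} [Field F] [CommRing A] [Algebra F A]
    {s : ℕ} (hs : 0 < s) {x : A} (hx : x ^ s = 1) {γ : F}
    (hγ : (γ - 1) * (γ + (s : F) - 1) ≠ 0) :
    (algebraMap F A γ + ∑ i ∈ Ico 1 s, x ^ i) *
        (algebraMap F A (-((γ - 1) * (γ + (s : F) - 1)))⁻¹ *
          (algebraMap F A (-(γ + (s : F) - 2)) + ∑ i ∈ Ico 1 s, x ^ i)) = 1 := by
  have key : (algebraMap F A γ + ∑ i ∈ Ico 1 s, x ^ i) *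
      (algebraMap F A (-(γ + (s : F) - 2)) + ∑ i ∈ Ico 1 s, x ^ i) =
        algebraMap F A (-((γ - 1) * (γ + (s : F) - 1))) := by
    simp only [sum_Ico_one_pow hs, map_neg, map_mul, map_sub, map_add, map_natCast, map_one,
      map_ofNat]
    linear_combination geom_sum_mul_self_of_pow_eq_one hx
  rw [mul_left_comm, key, ← map_mul, inv_mul_cancel₀ (neg_ne_zero.mpr hγ), map_one]

theorem stmt0_general {F : Type*} [Field F] (s : ℕ) (hs : 0 < s) (γ : F)
    (hγ : γ * (γ - 1) * (γ + (s : F) - 1) * (γ + (s : F) - 2) ≠ 0) :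
    Ideal.Quotient.mk (Ideal.span {(X : F[X]) ^ s - 1})
        ((C γ + ∑ i ∈ Finset.Ico 1 s, X ^ i) *
          (C (-((γ - 1) * (γ + (s : F) - 1)))⁻¹ *
            (C (-(γ + (s : F) - 2)) + ∑ i ∈ Finset.Ico 1 s, X ^ i))) = 1 := by
  have hx : Ideal.Quotient.mk (Ideal.span {(X : F[X]) ^ s - 1}) X ^ s = 1 := by
    rw [← map_pow, ← sub_eq_zero, ← map_one (Ideal.Quotient.mk _), ← map_sub,
      Ideal.Quotient.eq_zero_iff_mem]
    exact Ideal.subset_span rfl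
  have hγ' : (γ - 1) * (γ + (s : F) - 1) ≠ 0 := by
    contrapose! hγ
    rw [mul_assoc γ, hγ, mul_zero, zero_mul]
  simpa only [map_mul, map_add, map_sum, map_pow, ← algebraMap_eq, Ideal.Quotient.mk_algebraMap]
    using mul_inv_geom_sum_of_pow_eq_one hs hx hγ'

/-- In `F_q[x]/(x^s-1)`, with `F0 = x^{s-1}+⋯+x+γ` and
`F1 = (x^{s-1}+⋯+x-(γ+s-2)) / (-(γ-1)(γ+s-1))`, one has `F0 · F1 = 1`. -/
theorem stmt0 {F : Type*} [Field F] [Fintype F] (s : ℕ) (hs : 0 < s) (γ : F)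
    (hγ : γ * (γ - 1) * (γ + (s : F) - 1) * (γ + (s : F) - 2) ≠ 0) :
    Ideal.Quotient.mk (Ideal.span {(X : F[X]) ^ s - 1})
        ((C γ + ∑ i ∈ Finset.Ico 1 s, X ^ i) *
          (C (-((γ - 1) * (γ + (s : F) - 1)))⁻¹ *
            (C (-(γ + (s : F) - 2)) + ∑ i ∈ Finset.Ico 1 s, X ^ i))) = 1 :=
  stmt0_general s hs γ hγ
end

section
/- Let A, B, C be s×s block matrices over F_q such that (I_s ⊗ A)(I_s ⊠ B) = (I_s ⊠ B)(I_s ⊗ C). Then for any positive integer t and any distinct a_0, a_1 ∈ [t], the blown-up matrices satisfy Φ_{t,a_0}(A)·Φ_{t,a_1}(B) = Φ_{t,a_1}(B)·Φ_{t,a_0}(C). -/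
open Kronecker

/-- Flatten an `s × s` block matrix to an ordinary matrix. -/
def toBig {F : Type*} [Field F] {s p q : ℕ}
    (A : Fin s → Fin s → Matrix (Fin p) (Fin q) F) :
    Matrix (Fin s × Fin p) (Fin s × Fin q) F :=
  Matrix.of fun x y => A x.1 y.1 x.2 y.2

/-- The block Kronecker product `A ⊠ B`: the `(u,v)` block of `A ⊠ B` is `A ⊗ B u v`. -/
def boxT {F : Type*} [Field F] {m n u v p q : ℕ}
    (A : Matrix (Fin m) (Fin n) F) (B : Fin u → Fin v → Matrix (Fin p) (Fin q) F) :
    Matrix (Fin u × Fin m × Fin p) (Fin v × Fin n × Fin q) F :=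
  Matrix.of fun x y => A x.2.1 y.2.1 * B x.1 y.1 x.2.2 y.2.2

/-- The blow-up `Φ_{t,a}(K)`, with rows and columns of `[s^t]` indexed by their base-`s`
digit strings: the `(i,j)` block is `K i_a j_a` when all digits of `i, j` away from
position `a` agree, and `0` otherwise. -/
def blowUpB {F : Type*} [Field F] {s p q : ℕ} {t : ℕ} (a : Fin t)
    (K : Fin s → Fin s → Matrix (Fin p) (Fin q) F) :
    Matrix ((Fin t → Fin s) × Fin p) ((Fin t → Fin s) × Fin q) F :=
  Matrix.of fun x y =>
    if ∀ z, z ≠ a → x.1 z = y.1 z then K (x.1 a) (y.1 a) x.2 y.2 else 0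

/-- If `(I_s ⊗ A)(I_s ⊠ B) = (I_s ⊠ B)(I_s ⊗ C)`, then for any `t` and distinct
`a₀, a₁ ∈ [t]`, `Φ_{t,a₀}(A)·Φ_{t,a₁}(B) = Φ_{t,a₁}(B)·Φ_{t,a₀}(C)`. -/
theorem stmt4 {F : Type*} [Field F] {s p q : ℕ} (t : ℕ)
    (A : Fin s → Fin s → Matrix (Fin p) (Fin p) F)
    (B : Fin s → Fin s → Matrix (Fin p) (Fin q) F)
    (C : Fin s → Fin s → Matrix (Fin q) (Fin q) F)
    (hcomm : ((1 : Matrix (Fin s) (Fin s) F) ⊗ₖ toBig A) *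
        boxT (1 : Matrix (Fin s) (Fin s) F) B =
      boxT (1 : Matrix (Fin s) (Fin s) F) B *
        ((1 : Matrix (Fin s) (Fin s) F) ⊗ₖ toBig C))
    (a₀ a₁ : Fin t) (h : a₀ ≠ a₁) :
    blowUpB a₀ A * blowUpB a₁ B = blowUpB a₁ B * blowUpB a₀ C := by
  have hAB : ∀ i j u v, A i j * B u v = B u v * C i j := by
    intro i j u v
    ext x y
    have h1 := Matrix.ext_iff.2 hcomm (u, i, x) (v, j, y)
    simp only [Matrix.mul_apply, Matrix.kroneckerMap_apply, toBig, boxT, Matrix.of_apply,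
      Matrix.one_apply, Fintype.sum_prod_type, ite_mul, mul_ite, zero_mul, mul_zero,
      Finset.sum_ite_eq, Finset.sum_ite_eq', Finset.mem_univ, if_true] at h1
    simpa [Matrix.mul_apply] using h1
  ext ⟨x, xp⟩ ⟨y, yq⟩
  simp only [Matrix.mul_apply, blowUpB, Matrix.of_apply, Fintype.sum_prod_type]
  set P : Prop := ∀ w, w ≠ a₀ → w ≠ a₁ → x w = y w with hPdef
  have e1 : (∑ z : Fin t → Fin s, ∑ zp : Fin p,
      (if ∀ v : Fin t, v ≠ a₀ → x v = z v then A (x a₀) (z a₀) xp zp else 0) *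
        if ∀ v : Fin t, v ≠ a₁ → z v = y v then B (z a₁) (y a₁) zp yq else 0)
      = if P then (A (x a₀) (y a₀) * B (x a₁) (y a₁)) xp yq else 0 := by
    by_cases hP : P
    · rw [if_pos hP]
      rw [Finset.sum_eq_single (Function.update x a₀ (y a₀))]
      · have c1 : ∀ v, v ≠ a₀ → x v = Function.update x a₀ (y a₀) v := by
          intro v hv; rw [Function.update_of_ne hv]
        have c2 : ∀ v, v ≠ a₁ → Function.update x a₀ (y a₀) v = y v := by
          intro v hv
          rcases eq_or_ne v a₀ with rfl | hv0
          · simp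
          · rw [Function.update_of_ne hv0]; exact hP v hv0 hv
        simp only [if_pos c1, if_pos c2, Function.update_self,
          Function.update_of_ne (Ne.symm h), Matrix.mul_apply]
      · intro z _ hz
        by_cases d1 : ∀ v, v ≠ a₀ → x v = z v
        · by_cases d2 : ∀ v, v ≠ a₁ → z v = y v
          · exact absurd (funext fun v => by
              rcases eq_or_ne v a₀ with rfl | hv
              · simpa using d2 v h
              · simp [Function.update_of_ne hv, (d1 v hv).symm]) hz
          · simp [d2]
        · simp [d1]
      · simp
    · rw [if_neg hP]
      refine Finset.sum_eq_zero fun z _ => ?_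
      rw [hPdef] at hP
      push_neg at hP
      obtain ⟨w, hw0, hw1, hxy⟩ := hP
      by_cases d1 : ∀ v, v ≠ a₀ → x v = z v
      · have d2 : ¬ ∀ v, v ≠ a₁ → z v = y v := fun hc => hxy ((d1 w hw0).trans (hc w hw1))
        simp [d2]
      · simp [d1]
  have e2 : (∑ z : Fin t → Fin s, ∑ zq : Fin q,
      (if ∀ v : Fin t, v ≠ a₁ → x v = z v then B (x a₁) (z a₁) xp zq else 0) *
        if ∀ v : Fin t, v ≠ a₀ → z v = y v then C (z a₀) (y a₀) zq yq else 0)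
      = if P then (B (x a₁) (y a₁) * C (x a₀) (y a₀)) xp yq else 0 := by
    by_cases hP : P
    · rw [if_pos hP]
      rw [Finset.sum_eq_single (Function.update x a₁ (y a₁))]
      · have c1 : ∀ v, v ≠ a₁ → x v = Function.update x a₁ (y a₁) v := by
          intro v hv; rw [Function.update_of_ne hv]
        have c2 : ∀ v, v ≠ a₀ → Function.update x a₁ (y a₁) v = y v := by
          intro v hv
          rcases eq_or_ne v a₁ with rfl | hv1
          · simp
          · rw [Function.update_of_ne hv1]; exact hP v hv hv1
        simp only [if_pos c1, if_pos c2, Function.update_self,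
          Function.update_of_ne h, Matrix.mul_apply]
      · intro z _ hz
        by_cases d1 : ∀ v, v ≠ a₁ → x v = z v
        · by_cases d2 : ∀ v, v ≠ a₀ → z v = y v
          · exact absurd (funext fun v => by
              rcases eq_or_ne v a₁ with rfl | hv
              · simpa using d2 v (Ne.symm h)
              · simp [Function.update_of_ne hv, (d1 v hv).symm]) hz
          · simp [d2]
        · simp [d1]
      · simp
    · rw [if_neg hP]
      refine Finset.sum_eq_zero fun z _ => ?_
      rw [hPdef] at hP
      push_neg at hP
      obtain ⟨w, hw0, hw1, hxy⟩ := hP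
      by_cases d1 : ∀ v, v ≠ a₁ → x v = z v
      · have d2 : ¬ ∀ v, v ≠ a₀ → z v = y v := fun hc => hxy ((d1 w hw1).trans (hc w hw0))
        simp [d2]
      · simp [d1]
  rw [e1, e2, hAB]
end

section
/- Let s, t be positive integers, a ∈ [t], g ∈ [s], and let R_{a,g} = I_{s^{t-a-1}} ⊗ e_g ⊗ I_{s^a} be the row-selection matrix. Let K be an s×s block matrix whose block entries are column vectors of length r, and let c ∈ [t] with c = a. Then for any b, z ∈ [s], (R_{a,b} ⊗ I_r)·Φ_{t,a}(K)·R_{a,z}^T = I_{s^{t-1}} ⊗ K_{b,z}, where K_{b,z} is the (b,z) block entry of K. -/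
open Matrix

/-- The row-selection matrix `R_{a,g}` (for `t = m+1` levels): it selects the rows of
`[s^t]` (indexed by their base-`s` digit strings) whose `a`-th digit equals `g`. -/
def Rsel {F : Type*} [Field F] {s m : ℕ} (a : Fin (m + 1)) (g : Fin s) :
    Matrix (Fin m → Fin s) (Fin (m + 1) → Fin s) F :=
  Matrix.of fun f f' => if f' = Fin.insertNth a g f then 1 else 0

/-- `R_{a,g} ⊗ I_r`. -/
def RselKron {F : Type*} [Field F] {s m r : ℕ} (a : Fin (m + 1)) (g : Fin s) :
    Matrix ((Fin m → Fin s) × Fin r) ((Fin (m + 1) → Fin s) × Fin r) F :=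
  Matrix.of fun p q => Rsel a g p.1 q.1 * (if p.2 = q.2 then 1 else 0)

/-- The blow-up `Φ_{t,a}(K)` of an `s × s` block matrix `K` whose blocks are
column vectors of length `r`; rows/columns of `[s^t]` are indexed by base-`s`
digit strings. -/
def blowUpVec {F : Type*} [Field F] {s r : ℕ} {t : ℕ} (a : Fin t)
    (K : Fin s → Fin s → Fin r → F) :
    Matrix ((Fin t → Fin s) × Fin r) (Fin t → Fin s) F :=
  Matrix.of fun p q =>
    if ∀ z, z ≠ a → p.1 z = q z then K (p.1 a) (q a) p.2 else 0

theorem Fin.insertNth_agree_off_iff {α : Type*} {m : ℕ} (a : Fin (m + 1)) (x y : α)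
    (f f' : Fin m → α) :
    (∀ w, w ≠ a →
      Fin.insertNth (α := fun _ ↦ α) a x f w = Fin.insertNth (α := fun _ ↦ α) a y f' w) ↔
        f = f' := by
  simp [Fin.forall_iff_succAbove a, Fin.insertNth_apply_succAbove, funext_iff]

section

variable {F : Type*} [Field F] {s m : ℕ}

theorem mul_transpose_Rsel_apply {ι : Type*} (a : Fin (m + 1)) (g : Fin s)
    (M : Matrix ι (Fin (m + 1) → Fin s) F) (i : ι) (f : Fin m → Fin s) :
    (M * (Rsel (F := F) a g)ᵀ) i f = M i (Fin.insertNth a g f) := by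
  simp [mul_apply, Rsel]

theorem RselKron_mul_apply {r : ℕ} {κ : Type*} (a : Fin (m + 1)) (g : Fin s)
    (N : Matrix ((Fin (m + 1) → Fin s) × Fin r) κ F) (p : (Fin m → Fin s) × Fin r) (j : κ) :
    (RselKron (F := F) (r := r) a g * N) p j = N (Fin.insertNth a g p.1, p.2) j := by
  simp [mul_apply, RselKron, Rsel, Fintype.sum_prod_type]

theorem blowUpVec_insertNth_apply {r : ℕ} (a : Fin (m + 1)) (K : Fin s → Fin s → Fin r → F)
    (b z : Fin s) (f f' : Fin m → Fin s) (k : Fin r) :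
    blowUpVec a K (Fin.insertNth a b f, k) (Fin.insertNth a z f') =
      if f = f' then K b z k else 0 := by
  simp only [blowUpVec, of_apply, Fin.insertNth_agree_off_iff, Fin.insertNth_apply_same]

end

theorem stmt8_general {F : Type*} [Field F] {s m r : ℕ}
    (a : Fin (m + 1)) (b z : Fin s) (K : Fin s → Fin s → Fin r → F) :
    (RselKron a b * blowUpVec a K : Matrix _ _ F) * (Rsel (F := F) a z)ᵀ =
      Matrix.of fun (p : (Fin m → Fin s) × Fin r) (q : Fin m → Fin s) =>
        if p.1 = q then K b z p.2 else 0 := by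
  ext p q
  -- the outer product elaborates with the `CStarMatrix` instance, defeq but not syntactically
  -- equal to the `Matrix` one, hence `erw`
  erw [mul_transpose_Rsel_apply, RselKron_mul_apply, blowUpVec_insertNth_apply]
  rfl

/-- For `c = a`: `(R_{a,b} ⊗ I_r) Φ_{t,a}(K) R_{a,z}ᵀ = I_{s^{t-1}} ⊗ K_{b,z}`. -/
theorem stmt8 {F : Type*} [Field F] {s m r : ℕ} (hs : 0 < s)
    (a : Fin (m + 1)) (b z : Fin s) (K : Fin s → Fin s → Fin r → F) :
    (RselKron a b * blowUpVec a K : Matrix _ _ F) * (Rsel (F := F) a z)ᵀ =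
      Matrix.of fun (p : (Fin m → Fin s) × Fin r) (q : Fin m → Fin s) =>
        if p.1 = q then K b z p.2 else 0 :=
  stmt8_general a b z K
end

section
/- Let s, t be positive integers, a ≠ c ∈ [t], b, z ∈ [s], and let K be an s×s block matrix whose block entries are column vectors of length r. With R_{a,g} = I_{s^{t-a-1}} ⊗ e_g ⊗ I_{s^a}, one has (R_{a,b} ⊗ I_r)·Φ_{t,c}(K)·R_{a,z}^T = Φ_{t-1, c̃}(K) if b = z, and equals the zero matrix if b ≠ z, where c̃ = c if c < a and c̃ = c - 1 if c > a. -/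
open Matrix

/-! Both selection matrices only fix the `a`-th digit, of the row and of the column index
respectively, so every entry of the product is an entry of `Φ_{t,c}(K)` at two digit strings
carrying `b` resp. `z` at position `a`. If `b ≠ z` these strings differ at `a ≠ c`, so the entry
vanishes. If `b = z` they agree at `a`, and the blow-up condition on the remaining positions is
that of `Φ_{t-1,c̃}(K)`, since `c̃` is the position that `a.succAbove` sends to `c`. -/

lemma Fin.succAbove_mk_ite {m : ℕ} {a c : Fin (m + 1)} (hac : a ≠ c)
    (h : (if (c : ℕ) < a then (c : ℕ) else c - 1) < m) :
    a.succAbove ⟨if (c : ℕ) < a then c else c - 1, h⟩ = c := by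
  have : (a : ℕ) ≠ c := Fin.val_ne_of_ne hac
  by_cases hca : (c : ℕ) < a
  · rw [Fin.succAbove_of_castSucc_lt _ _ (by simp [Fin.lt_def, hca])]
    ext; simp [hca]
  · rw [Fin.succAbove_of_le_castSucc _ _ (by simp [Fin.le_def, hca]; omega)]
    ext; simp [hca]; omega

section
variable {F : Type*} [Field F] {s m r : ℕ}

lemma rselKron_mul_apply {n : Type*} (a : Fin (m + 1)) (b : Fin s)
    (M : Matrix ((Fin (m + 1) → Fin s) × Fin r) n F) (p : Fin m → Fin s) (j : Fin r) (y : n) :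
    (RselKron (F := F) (r := r) a b * M) (p, j) y = M (a.insertNth b p, j) y := by
  simp [Matrix.mul_apply, RselKron, Rsel, Fintype.sum_prod_type]

lemma mul_rsel_transpose_apply {n : Type*} [Fintype n] (a : Fin (m + 1)) (z : Fin s)
    (N : Matrix n (Fin (m + 1) → Fin s) F) (x : n) (q : Fin m → Fin s) :
    (N * (Rsel (F := F) a z)ᵀ) x q = N x (a.insertNth z q) := by
  simp [Matrix.mul_apply, Rsel]

variable (K : Fin s → Fin s → Fin r → F)

lemma blowUpVec_insertNth_insertNth {a c : Fin (m + 1)} {i : Fin m} (hi : a.succAbove i = c)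
    (b : Fin s) (p q : Fin m → Fin s) (j : Fin r) :
    blowUpVec c K (a.insertNth b p, j) (a.insertNth b q) = blowUpVec i K (p, j) q := by
  subst hi
  simp [blowUpVec, Fin.forall_iff_succAbove a]

lemma blowUpVec_insertNth_insertNth_of_ne {a c : Fin (m + 1)} (hac : a ≠ c) {b z : Fin s}
    (hbz : b ≠ z) (p q : Fin m → Fin s) (j : Fin r) :
    blowUpVec c K (a.insertNth b p, j) (a.insertNth z q) = 0 := by
  simp [blowUpVec, Fin.forall_iff_succAbove a, hac, hbz]

end

/-- For `a ≠ c`: `(R_{a,b} ⊗ I_r) Φ_{t,c}(K) R_{a,z}ᵀ` equals `Φ_{t-1,c̃}(K)` if `b = z`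
and `0` otherwise, where `c̃ = c` for `c < a` and `c̃ = c - 1` for `c > a`. -/
theorem stmt9 {F : Type*} [Field F] {s m r : ℕ}
    (a c : Fin (m + 1)) (hac : a ≠ c) (b z : Fin s)
    (K : Fin s → Fin s → Fin r → F) :
    (RselKron a b * blowUpVec c K : Matrix _ _ F) * (Rsel (F := F) a z)ᵀ =
      if b = z then
        blowUpVec (t := m) ⟨if (c : ℕ) < (a : ℕ) then (c : ℕ) else (c : ℕ) - 1, by
          have h1 := a.isLt
          have h2 := c.isLt
          have h3 : (a : ℕ) ≠ (c : ℕ) := fun hh => hac (Fin.ext hh)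
          split <;> omega⟩ K
      else 0 := by
  ext ⟨p, j⟩ q
  rw [mul_rsel_transpose_apply]
  -- the inner product of the statement elaborates with `CStarMatrix`'s `HMul` instance
  erw [rselKron_mul_apply]
  rcases eq_or_ne b z with rfl | hbz
  · rw [if_pos rfl]
    exact blowUpVec_insertNth_insertNth K (Fin.succAbove_mk_ite hac _) b p q j
  · rw [if_neg hbz]
    exact blowUpVec_insertNth_insertNth_of_ne K hac hbz p q j
end

section
/- Let F_q be a finite field with q ≥ 2s+1 and let ω be a primitive element. Set λ_i = ω^i for i ∈ [2s]. Then, viewing the 2s×2s matrix M(γ) with block structure [ (V_0 ⊗ 1^{(2)}) ⊙ K^{(2)}(λ_0,…,λ_{s-1}) | (V_1 ⊗ 1^{(2)}) ⊙ K^{(2)}(λ_s,…,λ_{2s-1}) ] — where V_0 has γ on the diagonal and 1 off-diagonal, V_1 = I_s, K^{(2)}(x_0,…,x_{s-1}) is the s×s block matrix with every block row equal to (L^{(2)}(x_0),…,L^{(2)}(x_{s-1})), L^{(2)}(x) = (1, x)^T, and ⊙ the Hadamard product after expanding each scalar of V_b to a 2×1 block — the determinant f(γ) = det M(γ) is a nonzero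 polynomial in γ of degree at most s. -/
open Polynomial

/-- The `2s × 2s` matrix `M(γ) = [ (V₀ ⊗ 1⁽²⁾) ⊙ K⁽²⁾(λ_0,…,λ_{s-1}) |
(V₁ ⊗ 1⁽²⁾) ⊙ K⁽²⁾(λ_s,…,λ_{2s-1}) ]` with `λ_i = ω^i`, viewed over `F[γ]`
(the variable `γ` is `X`).  Rows are indexed by (block row `i`, inner index `c`),
columns by (column `j` within a half, half `b`).  Explicitly the entry is
`(if i = j then γ else 1)·λ_j^c` on the left half and `(if i = j then λ_{s+j}^c else 0)`
on the right half. -/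
noncomputable def Mmat {F : Type*} [Field F] (s : ℕ) (ω : F) :
    Matrix (Fin s × Fin 2) (Fin s × Fin 2) (Polynomial F) :=
  Matrix.of fun p q =>
    if q.2 = 0 then
      (if p.1 = q.1 then X else 1) * C ((ω ^ (q.1 : ℕ)) ^ (p.2 : ℕ))
    else
      (if p.1 = q.1 then C ((ω ^ (s + (q.1 : ℕ))) ^ (p.2 : ℕ)) else 0)

/-! Only the `s` columns of the left half involve `γ`, each linearly, so `deg f ≤ s`, and the
coefficient of `γ^s` is the determinant of the matrix of leading column coefficients. That matrix is
block diagonal with transposed `2 × 2` Vandermonde blocks in `λ_j, λ_{s+j}`, which are invertible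
because `j < s + j < 2s ≤ q - 1 = ord ω`. -/

namespace Polynomial

theorem coeff_prod_sum_of_natDegree_le {ι R : Type*} [CommSemiring R] (s : Finset ι)
    (f : ι → R[X]) (d : ι → ℕ) (h : ∀ i ∈ s, (f i).natDegree ≤ d i) :
    (∏ i ∈ s, f i).coeff (∑ i ∈ s, d i) = ∏ i ∈ s, (f i).coeff (d i) := by
  classical
  induction s using Finset.induction_on with
  | empty => simp
  | insert a s ha ih =>
    have hs : ∀ i ∈ s, (f i).natDegree ≤ d i := fun i hi => h i (Finset.mem_insert_of_mem hi)
    rw [Finset.prod_insert ha, Finset.sum_insert ha, Finset.prod_insert ha,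
      coeff_mul_add_eq_of_natDegree_le (h a (Finset.mem_insert_self a s))
        ((natDegree_prod_le _ _).trans (Finset.sum_le_sum hs)), ih hs]

end Polynomial

namespace Matrix

variable {n R : Type*} [Fintype n] [DecidableEq n] [CommRing R]
  (M : Matrix n n R[X]) (d : n → ℕ)

theorem natDegree_det_le_sum_of_natDegree_le (hM : ∀ i j, (M i j).natDegree ≤ d j) :
    M.det.natDegree ≤ ∑ j, d j := by
  rw [det_apply]
  refine natDegree_sum_le_of_forall_le _ _ fun σ _ => ?_
  rw [Units.smul_def]
  exact (natDegree_smul_le _ _).trans <|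
    (natDegree_prod_le _ _).trans (Finset.sum_le_sum fun j _ => hM _ j)

theorem coeff_det_sum_of_natDegree_le (hM : ∀ i j, (M i j).natDegree ≤ d j) :
    M.det.coeff (∑ j, d j) = (of fun i j => (M i j).coeff (d j)).det := by
  simp only [det_apply', finsetSum_coeff, coeff_intCast_mul, of_apply,
    coeff_prod_sum_of_natDegree_le _ _ _ fun j _ => hM _ j]

end Matrix

open Matrix

section Mmat

variable {F : Type*} [Field F] (s : ℕ) (ω : F)

theorem Mmat_apply_zero (p : Fin s × Fin 2) (j : Fin s) :
    Mmat s ω p (j, 0) = (if p.1 = j then X else 1) * C ((ω ^ (j : ℕ)) ^ (p.2 : ℕ)) := rfl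

theorem Mmat_apply_one (p : Fin s × Fin 2) (j : Fin s) :
    Mmat s ω p (j, 1) = if p.1 = j then C ((ω ^ (s + (j : ℕ))) ^ (p.2 : ℕ)) else 0 := rfl

theorem natDegree_Mmat_apply_le :
    ∀ p q : Fin s × Fin 2, (Mmat s ω p q).natDegree ≤ if q.2 = 0 then 1 else 0
  | p, (j, 0) => by
    rw [Mmat_apply_zero, if_pos rfl]
    split_ifs
    · exact natDegree_mul_le_of_le natDegree_X_le (natDegree_C _).le
    · simp
  | p, (j, 1) => by
    rw [Mmat_apply_one]
    split_ifs <;> simp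

theorem sum_ite_snd_eq_zero : ∑ q : Fin s × Fin 2, (if q.2 = 0 then 1 else 0) = s := by
  rw [Fintype.sum_prod_type]
  simp

theorem coeff_Mmat_eq_blockDiagonal :
    (of fun p q => (Mmat s ω p q).coeff (if q.2 = 0 then 1 else 0)) =
      (blockDiagonal fun j : Fin s => (vandermonde ![ω ^ (j : ℕ), ω ^ (s + j : ℕ)])ᵀ).submatrix
        (Equiv.prodComm _ _) (Equiv.prodComm _ _) := by
  ext ⟨i, c⟩ ⟨j, b⟩
  match b with
  | 0 =>
    by_cases h : i = j <;>
      simp [Mmat_apply_zero, h, blockDiagonal_apply, vandermonde, mul_comm X,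
        coeff_C, -map_pow]
  | 1 =>
    by_cases h : i = j <;>
      simp [Mmat_apply_one, h, blockDiagonal_apply, vandermonde, coeff_C, -map_pow]

theorem det_coeff_Mmat :
    (of fun p q => (Mmat s ω p q).coeff (if q.2 = 0 then 1 else 0)).det =
      ∏ j : Fin s, (ω ^ (s + j : ℕ) - ω ^ (j : ℕ)) := by
  rw [coeff_Mmat_eq_blockDiagonal, det_submatrix_equiv_self, det_blockDiagonal]
  simp [det_fin_two]

end Mmat

theorem stmt10_general {F : Type*} [Field F] [Fintype F] (s : ℕ)
    (hq : 2 * s + 1 ≤ Fintype.card F) (ω : F)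
    (hω : orderOf ω = Fintype.card F - 1) :
    (Mmat s ω).det ≠ 0 ∧ (Mmat s ω).det.natDegree ≤ s := by
  have hdeg := natDegree_Mmat_apply_le s ω
  have hcoeff := coeff_det_sum_of_natDegree_le _ _ hdeg
  rw [sum_ite_snd_eq_zero, det_coeff_Mmat] at hcoeff
  refine ⟨fun h => ?_,
    (natDegree_det_le_sum_of_natDegree_le _ _ hdeg).trans_eq (sum_ite_snd_eq_zero s)⟩
  rw [h, coeff_zero, eq_comm, Finset.prod_eq_zero_iff] at hcoeff
  obtain ⟨j, -, hj⟩ := hcoeff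
  have hj_lt : (j : ℕ) < orderOf ω := by omega
  have hsj_lt : s + (j : ℕ) < orderOf ω := by omega
  exact (Fin.pos j).ne' (by simpa using pow_injOn_Iio_orderOf hsj_lt hj_lt (sub_eq_zero.mp hj))

/-- With `q ≥ 2s+1` and `ω` a primitive element of `F_q`, the determinant
`f(γ) = det M(γ)` is a nonzero polynomial in `γ` of degree at most `s`. -/
theorem stmt10 {F : Type*} [Field F] [Fintype F] (s : ℕ) (hs : 0 < s)
    (hq : 2 * s + 1 ≤ Fintype.card F) (ω : F)
    (hω : orderOf ω = Fintype.card F - 1) :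
    (Mmat s ω).det ≠ 0 ∧ (Mmat s ω).det.natDegree ≤ s :=
  stmt10_general s hq ω hω
end

section
/- Let F_q be a finite field with q ≥ sn + 1, where s, n are positive integers with n ≥ 3 and n even. Then there exist an element γ ∈ F_q and sn pairwise distinct elements λ_0, …, λ_{sn-1} ∈ F_q such that γ(γ-1)(γ+s-1)(γ+s-2) ≠ 0 and for every a ∈ [n/2], the 2s×2s matrix [ (V_0 ⊗ 1^{(2)}) ⊙ K^{(2)}(λ_{2sa},…,λ_{2sa+s-1}) | (V_1 ⊗ 1^{(2)}) ⊙ K^{(2)}(λ_{2sa+s},…,λ_{2sa+2s-1}) ] is invertible, where V_0 is the circulant rot(x^{s-1}+⋯+x+γ), V_1 = I_s. -/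
open Matrix Finset

lemma aux_group_invertible {F : Type*} [Field F] (s : ℕ) (hs : 0 < s)
    (γ θ : F) (μ : Fin s → F) (hμ : ∀ j, μ j ≠ 0)
    (hE : (γ - 1) * (θ - 1) ≠ 0)
    (hQ : ((γ - 1) * (θ - 1) + (s : F) * θ) * ((γ - 1) * (θ - 1) - (s : F))
        + θ * ((∑ j, μ j) * (∑ j, (μ j)⁻¹)) ≠ 0) :
    IsUnit (Matrix.of fun (p q : Fin s × Fin 2) =>
      if q.2 = 0 then
        (if p.1 = q.1 then γ else 1) * (θ * μ q.1) ^ (p.2 : ℕ)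
      else
        (if p.1 = q.1 then μ q.1 ^ (p.2 : ℕ) else 0)) := by
  classical
  set E0 : F := (γ - 1) * (θ - 1) with hE0def
  set M : Matrix (Fin s × Fin 2) (Fin s × Fin 2) F := Matrix.of fun (p q : Fin s × Fin 2) =>
      if q.2 = 0 then
        (if p.1 = q.1 then γ else 1) * (θ * μ q.1) ^ (p.2 : ℕ)
      else
        (if p.1 = q.1 then μ q.1 ^ (p.2 : ℕ) else 0) with hM
  rw [Matrix.isUnit_iff_isUnit_det, isUnit_iff_ne_zero]
  -- the reindexing equivalence
  let e : Fin s × Fin 2 ≃ Fin s ⊕ Fin s :=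
    { toFun := fun p => if p.2 = 0 then Sum.inl p.1 else Sum.inr p.1
      invFun := Sum.elim (fun i => (i, 0)) (fun i => (i, 1))
      left_inv := by rintro ⟨i, c⟩; fin_cases c <;> simp
      right_inv := by rintro (i | i) <;> simp }
  -- blocks
  set Cm : Matrix (Fin s) (Fin s) F := Matrix.of fun i j => if i = j then γ else 1 with hCm
  set Xm : Matrix (Fin s) (Fin s) F :=
    Matrix.of fun i j => (if i = j then γ else 1) * (θ * μ j) with hXm
  set Dμ : Matrix (Fin s) (Fin s) F := Matrix.diagonal μ with hDμ
  have hre : Matrix.reindex e e M = Matrix.fromBlocks Cm 1 Xm Dμ := by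
    ext i j
    cases i <;> cases j <;>
      simp [e, Matrix.reindex_apply, Matrix.submatrix_apply, M, Cm, Xm, Dμ,
        Matrix.one_apply, Matrix.diagonal_apply, eq_comm] <;>
      (split_ifs with h <;> simp [h])
  -- reduce to the Schur complement determinant
  have hdet1 : M.det = (Matrix.fromBlocks Cm 1 Xm Dμ).det := by
    rw [← Matrix.det_reindex_self e M, hre]
  set J : Matrix (Fin s ⊕ Fin s) (Fin s ⊕ Fin s) F := Matrix.fromBlocks 0 1 1 0 with hJ
  have hJJ : J * J = 1 := by
    simp [hJ, Matrix.fromBlocks_multiply, ← Matrix.fromBlocks_one]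
  have hJdet : J.det ≠ 0 := by
    intro h
    have : (J * J).det = 0 := by rw [Matrix.det_mul, h, mul_zero]
    rw [hJJ, Matrix.det_one] at this
    exact one_ne_zero this
  have hJM : J * Matrix.fromBlocks Cm 1 Xm Dμ = Matrix.fromBlocks Xm Dμ Cm 1 := by
    simp [hJ, Matrix.fromBlocks_multiply]
  -- the s × s matrix A
  set Am : Matrix (Fin s) (Fin s) F :=
    Matrix.of fun i j => (if i = j then γ else 1) * (θ * μ j - μ i) with hAm
  have hXD : Xm - Dμ * Cm = Am := by
    ext i j
    simp only [Matrix.sub_apply, Xm, Cm, Am, hDμ, Matrix.diagonal_mul, Matrix.of_apply]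
    split_ifs with h <;> ring
  have hstep : M.det ≠ 0 ↔ Am.det ≠ 0 := by
    constructor
    · intro h hA
      apply h
      rw [hdet1]
      have := congrArg Matrix.det hJM
      rw [Matrix.det_mul, Matrix.det_fromBlocks_one₂₂, hXD, hA, mul_eq_zero] at this
      rcases this with h1 | h1
      · exact absurd h1 hJdet
      · exact h1
    · intro h hM0
      apply h
      have := congrArg Matrix.det hJM
      rw [Matrix.det_mul, ← hdet1, hM0, mul_zero, Matrix.det_fromBlocks_one₂₂, hXD] at this
      exact this.symm
  rw [hstep]
  -- factor Am as Dμ * (E0 • 1 + W * Vt)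
  set W : Matrix (Fin s) (Fin 2) F := Matrix.of fun i b => if b = 0 then (μ i)⁻¹ else 1 with hW
  set Vt : Matrix (Fin 2) (Fin s) F := Matrix.of fun b j => if b = 0 then θ * μ j else -1 with hVt
  have hfact : Am = Dμ * (E0 • (1 : Matrix (Fin s) (Fin s) F) + W * Vt) := by
    ext i j
    show Am i j = (Dμ * (E0 • (1 : Matrix (Fin s) (Fin s) F) + W * Vt)) i j
    rw [hDμ, Matrix.diagonal_mul]
    simp only [Am, Matrix.of_apply, Matrix.add_apply,
      Matrix.smul_apply, Matrix.one_apply, Matrix.mul_apply, Fin.sum_univ_two, W, Vt,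
      smul_eq_mul]
    norm_num
    by_cases h : i = j
    · subst h
      simp only [if_pos rfl, if_true]
      have h1 : (μ i)⁻¹ * (θ * μ i) = θ := by
        rw [mul_comm θ (μ i), ← mul_assoc, inv_mul_cancel₀ (hμ i), one_mul]
      rw [h1, hE0def]
      ring
    · simp only [if_neg h]
      rw [zero_add, mul_add, ← mul_assoc, mul_inv_cancel₀ (hμ i)]
      ring
  have hsmul : E0 • ((1 : Matrix (Fin s) (Fin s) F) + (E0⁻¹ • W) * Vt)
      = E0 • (1 : Matrix (Fin s) (Fin s) F) + W * Vt := by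
    rw [smul_add, Matrix.smul_mul, smul_smul, mul_inv_cancel₀ hE, one_smul]
  have hdetA : Am.det = (∏ i, μ i) *
      (E0 ^ s * ((1 : Matrix (Fin 2) (Fin 2) F) + Vt * (E0⁻¹ • W)).det) := by
    rw [hfact, Matrix.det_mul, hDμ, Matrix.det_diagonal, ← hsmul, Matrix.det_smul,
      Fintype.card_fin, Matrix.det_one_add_mul_comm]
  -- compute the 2 × 2 determinant
  set S1 : F := ∑ j, μ j with hS1
  set T1 : F := ∑ j, (μ j)⁻¹ with hT1
  have s00 : ∑ j : Fin s, (θ * μ j) * (E0⁻¹ * (μ j)⁻¹) = (s : F) * (θ * E0⁻¹) := by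
    rw [Finset.sum_congr rfl (fun j _ => show (θ * μ j) * (E0⁻¹ * (μ j)⁻¹) = θ * E0⁻¹ by
      calc (θ * μ j) * (E0⁻¹ * (μ j)⁻¹) = θ * E0⁻¹ * (μ j * (μ j)⁻¹) := by ring
        _ = θ * E0⁻¹ := by rw [mul_inv_cancel₀ (hμ j), mul_one])]
    simp [Finset.sum_const, Finset.card_univ, mul_assoc]
  have hmat : (1 : Matrix (Fin 2) (Fin 2) F) + Vt * (E0⁻¹ • W) =
      !![1 + (s : F) * (θ * E0⁻¹), θ * E0⁻¹ * S1;
         -(E0⁻¹ * T1), 1 - (s : F) * E0⁻¹] := by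
    ext b b'
    fin_cases b <;> fin_cases b' <;>
      simp only [Matrix.add_apply, Matrix.one_apply, Matrix.mul_apply, Matrix.smul_apply,
        W, Vt, Matrix.of_apply, smul_eq_mul, Matrix.cons_val', Matrix.cons_val_zero,
        Matrix.cons_val_one, Matrix.head_cons, Matrix.empty_val',
        Matrix.cons_val_fin_one, Fin.mk_zero, Fin.mk_one] <;> norm_num
    · exact s00
    · rw [hS1, Finset.mul_sum]
      exact Finset.sum_congr rfl fun j _ => by ring
    · rw [hT1, Finset.mul_sum]
    · ring
  have h2 : ((1 : Matrix (Fin 2) (Fin 2) F) + Vt * (E0⁻¹ • W)).det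
      = (1 + (s : F) * (θ * E0⁻¹)) * (1 - (s : F) * E0⁻¹)
        + (θ * E0⁻¹ * S1) * (E0⁻¹ * T1) := by
    rw [hmat, Matrix.det_fin_two_of]
    ring
  have key : E0 ^ 2 * ((1 + (s : F) * (θ * E0⁻¹)) * (1 - (s : F) * E0⁻¹)
      + (θ * E0⁻¹ * S1) * (E0⁻¹ * T1))
      = (E0 + (s : F) * θ) * (E0 - (s : F)) + θ * (S1 * T1) := by
    field_simp
  have hbr : (1 + (s : F) * (θ * E0⁻¹)) * (1 - (s : F) * E0⁻¹)
      + (θ * E0⁻¹ * S1) * (E0⁻¹ * T1) ≠ 0 := by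
    intro h
    rw [h, mul_zero] at key
    exact hQ key.symm
  rw [hdetA, h2]
  exact mul_ne_zero (Finset.prod_ne_zero_iff.2 fun j _ => hμ j)
    (mul_ne_zero (pow_ne_zero _ hE) hbr)

/-- For `q ≥ sn+1` there exist `γ` and `sn` pairwise distinct `λ_i` in `F_q`
with `γ(γ-1)(γ+s-1)(γ+s-2) ≠ 0` such that for every group index `a ∈ [n/2]` the
`2s × 2s` matrix `[ (V₀ ⊗ 1⁽²⁾) ⊙ K⁽²⁾(λ_{2sa},…,λ_{2sa+s-1}) |
(V₁ ⊗ 1⁽²⁾) ⊙ K⁽²⁾(λ_{2sa+s},…,λ_{2sa+2s-1}) ]` is invertible.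
Here `V₀ = rot(x^{s-1}+⋯+x+γ)` is the circulant matrix with `γ` on the diagonal and
`1` elsewhere, and `V₁ = I_s`; rows of the matrix are indexed by
(block row `i`, inner index `c`) and columns by (column `j`, half `b`). -/
theorem stmt11 {F : Type*} [Field F] [Fintype F] (s n : ℕ) (hs : 0 < s)
    (hn3 : 3 ≤ n) (hn2 : 2 ∣ n) (hq : s * n + 1 ≤ Fintype.card F) :
    ∃ (γ : F) (lam : ℕ → F),
      (∀ i j, i < s * n → j < s * n → lam i = lam j → i = j) ∧
      γ * (γ - 1) * (γ + (s : F) - 1) * (γ + (s : F) - 2) ≠ 0 ∧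
      ∀ a, a < n / 2 →
        IsUnit (Matrix.of fun (p q : Fin s × Fin 2) =>
          if q.2 = 0 then
            (if p.1 = q.1 then γ else 1) * lam (2 * s * a + (q.1 : ℕ)) ^ (p.2 : ℕ)
          else
            (if p.1 = q.1 then lam (2 * s * a + s + (q.1 : ℕ)) ^ (p.2 : ℕ) else 0)) := by
  classical
  have hn4 : 4 ≤ n := by obtain ⟨k, rfl⟩ := hn2; omega
  -- a generator of the multiplicative group
  obtain ⟨g, hg⟩ := IsCyclic.exists_generator (α := Fˣ)
  have hord : orderOf g = Fintype.card F - 1 := by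
    rw [orderOf_eq_card_of_forall_mem_zpowers hg, Nat.card_units, Nat.card_eq_fintype_card]
  set u : F := (g : F) with hu_def
  have hu : u ≠ 0 := Units.ne_zero g
  set lam : ℕ → F := fun i => u ^ i with hlam
  have hsn_le : s * n ≤ Fintype.card F - 1 := by omega
  have hinj : ∀ i j, i < s * n → j < s * n → lam i = lam j → i = j := by
    intro i j hi hj hij
    have hgij : g ^ i = g ^ j := Units.ext (by
      simpa [Units.val_pow_eq_pow_val, hlam] using hij)
    exact pow_injOn_Iio_orderOf (by simp [hord]; omega) (by simp [hord]; omega) hgij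
  -- the constants
  set θ : F := (u ^ s)⁻¹ with hθ
  have hθ1 : θ ≠ 1 := by
    intro h
    have hus : u ^ s = 1 := by
      have := congrArg Inv.inv h
      simpa [hθ] using this
    have hgs : g ^ s = 1 := Units.ext (by simpa [Units.val_pow_eq_pow_val] using hus)
    have hdvd : orderOf g ∣ s := orderOf_dvd_of_pow_eq_one hgs
    have hle : orderOf g ≤ s := Nat.le_of_dvd hs hdvd
    have hslt : s < s * n := by nlinarith
    omega
  have htne : θ - 1 ≠ 0 := sub_ne_zero.2 hθ1
  set G : F := ∑ j : Fin s, u ^ (j : ℕ) with hG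
  set G' : F := ∑ j : Fin s, (u ^ (j : ℕ))⁻¹ with hG'
  set t : F := θ - 1 with ht
  set p : Polynomial F := Polynomial.C (t ^ 2) * Polynomial.X ^ 2
      + Polynomial.C (t ^ 2 * ((s : F) - 2)) * Polynomial.X
      + Polynomial.C (t ^ 2 * (1 - (s : F)) + θ * (G * G') - (s : F) ^ 2 * θ) with hp
  have ht2 : t ^ 2 ≠ 0 := pow_ne_zero _ htne
  have hpdeg : p.natDegree = 2 := Polynomial.natDegree_quadratic ht2
  have hp0 : p ≠ 0 := by intro h; rw [h] at hpdeg; simp at hpdeg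
  have hroots : p.roots.toFinset.card ≤ 2 := by
    refine le_trans (Multiset.toFinset_card_le _) ?_
    refine le_trans (Polynomial.card_roots' p) ?_
    rw [hpdeg]
  -- choose γ avoiding the bad set
  set Bad : Finset F := ({0, 1, 1 - (s : F), 2 - (s : F)} : Finset F) ∪ p.roots.toFinset
    with hBadDef
  have hBadcard : Bad.card < Fintype.card F := by
    rw [hBadDef]
    have hle4 : ({0, 1, 1 - (s : F), 2 - (s : F)} : Finset F).card ≤ 4 := by
      refine le_trans (Finset.card_insert_le _ _) ?_
      refine le_trans (Nat.succ_le_succ (Finset.card_insert_le _ _)) ?_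
      refine le_trans (Nat.succ_le_succ (Nat.succ_le_succ (Finset.card_insert_le _ _))) ?_
      simp
    by_cases hc : 7 ≤ Fintype.card F
    · have := Finset.card_union_le ({0, 1, 1 - (s : F), 2 - (s : F)} : Finset F) p.roots.toFinset
      omega
    · push_neg at hc
      have hs1 : s = 1 := by nlinarith
      have hsub : ({0, 1, 1 - (s : F), 2 - (s : F)} : Finset F) ⊆ {0, 1} := by
        intro x hx
        simp only [hs1, Nat.cast_one] at hx
        norm_num at hx
        simp only [Finset.mem_insert, Finset.mem_singleton]
        tauto
      have hle2 : ({0, 1, 1 - (s : F), 2 - (s : F)} : Finset F).card ≤ 2 := by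
        refine le_trans (Finset.card_le_card hsub) ?_
        refine le_trans (Finset.card_insert_le _ _) (by simp)
      have := Finset.card_union_le ({0, 1, 1 - (s : F), 2 - (s : F)} : Finset F) p.roots.toFinset
      have hcard5 : 5 ≤ Fintype.card F := by
        have : 4 ≤ s * n := by nlinarith
        omega
      omega
  have hex : ∃ γ : F, γ ∉ Bad := by
    by_contra h
    push_neg at h
    have hsub : (Finset.univ : Finset F) ⊆ Bad := fun x _ => h x
    have := Finset.card_le_card hsub
    rw [Finset.card_univ] at this
    omega
  obtain ⟨γ, hγ⟩ := hex
  simp only [hBadDef, Finset.mem_union, Finset.mem_insert, Finset.mem_singleton, not_or] at hγ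
  obtain ⟨⟨hγ0, hγ1, hγ1s, hγ2s⟩, hγroot⟩ := hγ
  have hpγ : p.eval γ ≠ 0 := by
    intro h
    exact hγroot (Multiset.mem_toFinset.2 ((Polynomial.mem_roots').2 ⟨hp0, h⟩))
  refine ⟨γ, lam, hinj, ?_, ?_⟩
  · refine mul_ne_zero (mul_ne_zero (mul_ne_zero hγ0 (sub_ne_zero.2 hγ1)) ?_) ?_
    · intro h; exact hγ1s (by linear_combination h)
    · intro h; exact hγ2s (by linear_combination h)
  · intro a _
    set μ : Fin s → F := fun j => u ^ (2 * s * a + s + (j : ℕ)) with hμdef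
    have hμ : ∀ j, μ j ≠ 0 := fun j => pow_ne_zero _ hu
    have hν : ∀ j : Fin s, lam (2 * s * a + (j : ℕ)) = θ * μ j := by
      intro j
      show u ^ (2 * s * a + (j : ℕ)) = (u ^ s)⁻¹ * u ^ (2 * s * a + s + (j : ℕ))
      rw [show 2 * s * a + s + (j : ℕ) = s + (2 * s * a + (j : ℕ)) by ring]
      rw [pow_add u s (2 * s * a + (j : ℕ)), ← mul_assoc, inv_mul_cancel₀ (pow_ne_zero s hu),
        one_mul]
    have hmeq : (Matrix.of fun (p q : Fin s × Fin 2) =>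
          if q.2 = 0 then
            (if p.1 = q.1 then γ else 1) * lam (2 * s * a + (q.1 : ℕ)) ^ (p.2 : ℕ)
          else
            (if p.1 = q.1 then lam (2 * s * a + s + (q.1 : ℕ)) ^ (p.2 : ℕ) else 0))
        = (Matrix.of fun (p q : Fin s × Fin 2) =>
          if q.2 = 0 then
            (if p.1 = q.1 then γ else 1) * (θ * μ q.1) ^ (p.2 : ℕ)
          else
            (if p.1 = q.1 then μ q.1 ^ (p.2 : ℕ) else 0)) := by
      ext pp qq
      simp only [Matrix.of_apply]
      rw [hν qq.1]
    rw [hmeq]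
    have hE : (γ - 1) * (θ - 1) ≠ 0 := mul_ne_zero (sub_ne_zero.2 hγ1) htne
    have hST : (∑ j, μ j) * (∑ j, (μ j)⁻¹) = G * G' := by
      have h1 : (∑ j, μ j) = u ^ (2 * s * a + s) * G := by
        rw [hG, Finset.mul_sum]
        exact Finset.sum_congr rfl fun j _ => by
          simp only [hμdef]
          rw [pow_add u (2 * s * a + s) (j : ℕ)]
      have h2 : (∑ j, (μ j)⁻¹) = (u ^ (2 * s * a + s))⁻¹ * G' := by
        rw [hG', Finset.mul_sum]
        exact Finset.sum_congr rfl fun j _ => by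
          simp only [hμdef]
          rw [pow_add u (2 * s * a + s) (j : ℕ), mul_inv]
      rw [h1, h2, mul_mul_mul_comm, mul_inv_cancel₀ (pow_ne_zero _ hu), one_mul]
    apply aux_group_invertible s hs γ θ μ hμ hE
    rw [hST]
    intro h
    apply hpγ
    have heval : p.eval γ = ((γ - 1) * (θ - 1) + (s : F) * θ) * ((γ - 1) * (θ - 1) - (s : F))
        + θ * (G * G') := by
      simp only [hp, ht, Polynomial.eval_add, Polynomial.eval_mul, Polynomial.eval_pow,
        Polynomial.eval_C, Polynomial.eval_X]
      ring
    rw [heval]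
    exact h
end

section
/- Let s ≥ 2, h ≥ 1 be integers, ℓ̃ a positive integer, and for a group index a, indices g ∈ [s], z ∈ [h], define the s × (s+h-1) block matrix S_{a,g,z} over F_q by S_{a,g,z}(i,j) = R_{a, g ⊕_s i} if j = i or j = z + s, and 0 otherwise, where R_{a,g} are the ℓ̃/s × ℓ̃ row-selection matrices satisfying Σ_{g∈[s]} R_{a,g}^T R_{a,g} = I_{ℓ̃}. For z ∈ [h], define the (s+h-1)×(s+h-1) block matrix Q_z with block entries Q_z(i,j) = I_{ℓ̃} if i = j ∈ {s, …, s+h-2}, Q_z(i,j) = -I_{ℓ̃} if i ∈ [s] and j = z+s, and 0 otherwise. Then Σ_{g∈[s]} S_{a,g,h-1}^T S_{a,g,z} + Q_z = I_{(s+h-1)ℓ̃}. -/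
open Matrix

/-- The `s × (s+h-1)` block matrix `S_{a,g,z}` built from the row-selection matrices
`R_{a,·}` (here abstracted as `R g : Matrix ι J F`): its `(i,j)` block is
`R (g ⊕_s i)` when `j = i` or `j = z + s`, and `0` otherwise. -/
def Smat {F : Type*} [Field F] {ι J : Type*} {s h : ℕ}
    (R : Fin s → Matrix ι J F) (z : Fin h) (g : Fin s) :
    Matrix (Fin s × ι) (Fin (s + h - 1) × J) F :=
  Matrix.of fun x y =>
    if (y.1 : ℕ) = (x.1 : ℕ) ∨ (y.1 : ℕ) = (z : ℕ) + s then R (g + x.1) x.2 y.2 else 0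

/-- The `(s+h-1) × (s+h-1)` block matrix `Q_z`: `I` at diagonal blocks `i = j ≥ s`,
`-I` at blocks `(i, z+s)` for `i ∈ [s]`, and `0` elsewhere. -/
def Qmat {F : Type*} [Field F] {J : Type*} [DecidableEq J] (s h : ℕ) (z : Fin h) :
    Matrix (Fin (s + h - 1) × J) (Fin (s + h - 1) × J) F :=
  Matrix.of fun x y =>
    if x.1 = y.1 ∧ s ≤ (x.1 : ℕ) then (if x.2 = y.2 then 1 else 0)
    else if (x.1 : ℕ) < s ∧ (y.1 : ℕ) = (z : ℕ) + s then (if x.2 = y.2 then -1 else 0)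
    else 0

/-- `Σ_{g∈[s]} S_{a,g,h-1}ᵀ S_{a,g,z} + Q_z = I`. -/
theorem stmt12 {F : Type*} [Field F] {ι J : Type*}
    [Fintype ι] [Fintype J] [DecidableEq ι] [DecidableEq J]
    (s h : ℕ) (hs : 2 ≤ s) (hh : 1 ≤ h)
    (R : Fin s → Matrix ι J F)
    (hR : ∑ g : Fin s, (R g)ᵀ * R g = 1) (z : Fin h) :
    (∑ g : Fin s, (Smat R (⟨h - 1, by omega⟩ : Fin h) g)ᵀ * Smat R z g) +
      Qmat s h z = 1 := by
  haveI : NeZero s := ⟨by omega⟩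
  have hsum : ∀ (i : Fin s) (u v : J),
      ∑ g : Fin s, ∑ w : ι, R (g + i) w u * R (g + i) w v
        = if u = v then (1:F) else 0 := by
    intro i u v
    have h1 := congrFun (congrFun hR u) v
    simp only [Matrix.sum_apply, Matrix.mul_apply, Matrix.transpose_apply,
      Matrix.one_apply] at h1
    rw [← h1]
    exact Fintype.sum_equiv (Equiv.addRight i) _ _ (fun g => rfl)
  ext ⟨i, u⟩ ⟨j, v⟩
  have hi1 : ¬ ((i : ℕ) = ((⟨h-1, by omega⟩ : Fin h) : ℕ) + s) := by
    have := i.isLt; simp only [Fin.val_mk]; omega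
  simp only [Matrix.add_apply, Matrix.sum_apply, Matrix.mul_apply,
    Fintype.sum_prod_type, Matrix.transpose_apply, Smat, Matrix.of_apply,
    hi1, or_false, ite_mul, zero_mul, Qmat, Matrix.one_apply, Prod.mk.injEq]
  rw [Finset.sum_comm]
  by_cases hi : (i : ℕ) < s
  · rw [Finset.sum_eq_single (⟨(i : ℕ), hi⟩ : Fin s)]
    · have hii : (i : ℕ) = ((⟨(i : ℕ), hi⟩ : Fin s) : ℕ) := rfl
      simp only [← hii, if_pos rfl]
      by_cases hq : (j : ℕ) = (i : ℕ) ∨ (j : ℕ) = (z : ℕ) + s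
      · simp only [if_pos hq, hsum]
        simp only [Fin.ext_iff] at *
        split_ifs <;> simp_all <;> omega
      · simp only [if_neg hq, mul_zero, Finset.sum_const_zero, zero_add]
        simp only [Fin.ext_iff] at *
        split_ifs <;> simp_all <;> omega
    · intro b _ hb
      have hb' : ¬ ((i : ℕ) = (b : ℕ)) := fun hc => hb (Fin.ext hc.symm)
      simp [hb']
    · simp
  · rw [Finset.sum_eq_zero (fun y _ => by
      have hy := y.isLt
      have : ¬ ((i : ℕ) = (y : ℕ)) := by omega
      simp [this])]
    simp only [Fin.ext_iff] at *
    split_ifs <;> simp_all <;> omega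
end

section
/- With the notation of the previous setup (S_{a,g,z} built from row-selection matrices R_{a,g}, and Q_z as defined), for any a, z ∈ [h], and any rℓ̃ × ℓ̃ matrix M over F_q, one has (S_{a,0,z} ⊗ I_r)·(I_{s+h-1} ⊗ M)·Q_z = 0. -/
/-!
Right multiplication by `Q_z` kills the first `s` column blocks and replaces column block `z + s`
by itself minus the sum of the first `s` column blocks. In row block `i < s` of
`(S_{a,0,z} ⊗ I_r)(I ⊗ M)` the only nonzero column blocks are `i` and `z + s`, and both equal
`R_i M_t`; so every column block of the product with `Q_z` vanishes.
-/

open Matrix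

/-- `S_{a,0,z} ⊗ I_r`, where `S_{a,g,z}` is the `s × (s+h-1)` block matrix built from the
row-selection matrices `R_{a,·}` (abstracted as `R g : Matrix ι J F`): its `(i,j)` block
is `R (g ⊕_s i)` when `j = i` or `j = z + s`, and `0` otherwise. -/
def SkronIr {F : Type*} [Field F] {ι J : Type*} {s h r : ℕ}
    (R : Fin s → Matrix ι J F) (z : Fin h) (g : Fin s) :
    Matrix ((Fin s × ι) × Fin r) (Fin (s + h - 1) × J × Fin r) F :=
  Matrix.of fun x y =>
    (if (y.1 : ℕ) = (x.1.1 : ℕ) ∨ (y.1 : ℕ) = (z : ℕ) + s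
      then R (g + x.1.1) x.1.2 y.2.1 else 0) *
    (if x.2 = y.2.2 then 1 else 0)

/-- `I_{s+h-1} ⊗ M` for an `rℓ̃ × ℓ̃` matrix `M`. -/
def IkronM {F : Type*} [Field F] {J : Type*} [DecidableEq J] {s h r : ℕ}
    (M : Matrix (J × Fin r) J F) :
    Matrix (Fin (s + h - 1) × J × Fin r) (Fin (s + h - 1) × J) F :=
  Matrix.of fun x y => if x.1 = y.1 then M x.2 y.2 else 0

theorem SkronIr_mul_IkronM_apply {F : Type*} [Field F] {ι J : Type*} [Fintype J]
    [DecidableEq J] {s h r : ℕ} (R : Fin s → Matrix ι J F) (z : Fin h) (g : Fin s)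
    (M : Matrix (J × Fin r) J F) (i : Fin s) (x : ι) (t : Fin r) (j : Fin (s + h - 1)) (y : J) :
    (SkronIr R z g * IkronM (s := s) (h := h) M :
      Matrix ((Fin s × ι) × Fin r) (Fin (s + h - 1) × J) F) ((i, x), t) (j, y) =
      if (j : ℕ) = i ∨ (j : ℕ) = z + s then (R (g + i) * M.submatrix (·, t) id) x y else 0 := by
  -- the product in the statement elaborates through the (defeq) `CStarMatrix` multiplication
  change (SkronIr (r := r) R z g * IkronM (s := s) (h := h) M) ((i, x), t) (j, y) = _
  simp only [mul_apply, SkronIr, IkronM, of_apply, Fintype.sum_prod_type, submatrix_apply,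
    id, ite_mul, mul_ite, zero_mul, mul_zero, mul_one, Finset.sum_ite_irrel,
    Finset.sum_const_zero, Finset.sum_ite_eq, Finset.sum_ite_eq', Finset.mem_univ, if_true]

theorem mul_Qmat_apply {F : Type*} [Field F] {α J : Type*} [Fintype J] [DecidableEq J]
    {s h : ℕ} (z : Fin h) (P : Matrix α (Fin (s + h - 1) × J) F) (a : α)
    (j : Fin (s + h - 1)) (y : J) :
    (P * Qmat (F := F) (J := J) s h z) a (j, y) =
      (if s ≤ (j : ℕ) then P a (j, y) else 0) -
        if (j : ℕ) = z + s then
          ∑ k : Fin (s + h - 1), if (k : ℕ) < s then P a (k, y) else 0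
        else 0 := by
  simp only [mul_apply, Qmat, of_apply, Fintype.sum_prod_type, mul_ite, mul_neg, mul_one,
    mul_zero, Finset.sum_ite_irrel, Finset.sum_const_zero, Finset.sum_ite_eq', Finset.mem_univ,
    if_true]
  have split_cases : ∀ k : Fin (s + h - 1),
      (if k = j ∧ s ≤ (k : ℕ) then P a (k, y)
        else if (k : ℕ) < s ∧ (j : ℕ) = z + s then -P a (k, y) else 0) =
      (if k = j then if s ≤ (k : ℕ) then P a (k, y) else 0 else 0) -
        if (j : ℕ) = z + s then if (k : ℕ) < s then P a (k, y) else 0 else 0 := by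
    intro k
    rcases eq_or_ne k j with rfl | hkj
    · by_cases hsk : s ≤ (k : ℕ)
      · simp [hsk, show ¬(k : ℕ) < s by omega]
      · simp [hsk, show (k : ℕ) < s by omega, neg_ite]
    · simp [hkj, neg_ite, ite_and, and_comm]
  simp only [split_cases, Finset.sum_sub_distrib, Finset.sum_ite_eq', Finset.mem_univ, if_true,
    Finset.sum_ite_irrel, Finset.sum_const_zero]

theorem stmt13_general {F : Type*} [Field F] {ι J : Type*}
    [Fintype J] [DecidableEq J]
    (s h r : ℕ) [NeZero s]
    (R : Fin s → Matrix ι J F)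
    (z : Fin h) (M : Matrix (J × Fin r) J F) :
    (SkronIr R z 0 * IkronM (s := s) (h := h) M :
      Matrix ((Fin s × ι) × Fin r) (Fin (s + h - 1) × J) F) * Qmat (F := F) (J := J) s h z =
      (0 : Matrix ((Fin s × ι) × Fin r) (Fin (s + h - 1) × J) F) := by
  ext ⟨⟨i, x⟩, t⟩ ⟨j, y⟩
  simp only [mul_Qmat_apply, SkronIr_mul_IkronM_apply, Matrix.zero_apply]
  set c := (R (0 + i) * M.submatrix (·, t) id) x y
  by_cases hj : (j : ℕ) = z + s
  · have hi : (i : ℕ) < s + h - 1 := by omega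
    have sum_first_columns : (∑ k : Fin (s + h - 1),
        if (k : ℕ) < s then if (k : ℕ) = i ∨ (k : ℕ) = z + s then c else 0 else 0) = c := by
      rw [Finset.sum_eq_single ⟨i, hi⟩ (fun k _ hk => ?_) (by simp)]
      · simp
      · have : (k : ℕ) ≠ i := fun h => hk (Fin.ext h)
        split_ifs <;> first | rfl | omega
    rw [if_pos (by omega), if_pos (Or.inr hj), if_pos hj, sum_first_columns, sub_self]
  · rw [if_neg hj, sub_zero]
    split_ifs <;> first | rfl | omega

/-- `(S_{a,0,z} ⊗ I_r)·(I_{s+h-1} ⊗ M)·Q_z = 0`. -/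
theorem stmt13 {F : Type*} [Field F] {ι J : Type*}
    [Fintype ι] [Fintype J] [DecidableEq ι] [DecidableEq J]
    (s h r : ℕ) [NeZero s] (hs : 2 ≤ s) (hh : 1 ≤ h)
    (R : Fin s → Matrix ι J F)
    (hR : ∑ g : Fin s, (R g)ᵀ * R g = 1)
    (z : Fin h) (M : Matrix (J × Fin r) J F) :
    (SkronIr R z 0 * IkronM (s := s) (h := h) M :
      Matrix ((Fin s × ι) × Fin r) (Fin (s + h - 1) × J) F) * Qmat (F := F) (J := J) s h z =
      (0 : Matrix ((Fin s × ι) × Fin r) (Fin (s + h - 1) × J) F) :=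
  stmt13_general s h r R z M
end

section
/- Let ω be a primitive element of F_q with q ≥ 2s+1, s ≥ 1, and let D be the s×s matrix (indices 0-based) with D(i,j) = γ(1-ω^s) for i=j and D(i,j) = 1 - ω^{s+i-j} for i≠j. Then det D, viewed as a polynomial in F_q[γ], has degree s and is therefore nonzero. -/
open Polynomial

/-- The `s × s` matrix `D` over `F[γ]` with diagonal entries `γ(1-ω^s)` and
off-diagonal `(i,j)` entries `1 - ω^{s+i-j}` (0-indexed); the variable `γ` is `X`. -/
noncomputable def Dmat {F : Type*} [Field F] (s : ℕ) (ω : F) :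
    Matrix (Fin s) (Fin s) (Polynomial F) :=
  Matrix.of fun i j =>
    if i = j then X * C (1 - ω ^ s)
    else C (1 - ω ^ (s + (i : ℕ) - (j : ℕ)))

/-- With `ω` a primitive element of `F_q` and `q ≥ 2s+1`, `det D` viewed as a
polynomial in `γ` has degree exactly `s`, and is therefore nonzero. -/
theorem stmt16 {F : Type*} [Field F] [Fintype F] (s : ℕ) (hs : 0 < s)
    (hq : 2 * s + 1 ≤ Fintype.card F) (ω : F)
    (hω : orderOf ω = Fintype.card F - 1) :
    (Dmat s ω).det.natDegree = s ∧ (Dmat s ω).det ≠ 0 := by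
  have hωs : ω ^ s ≠ 1 := by
    intro h
    have hd := orderOf_dvd_of_pow_eq_one h
    rw [hω] at hd
    have := Nat.le_of_dvd hs hd
    omega
  have hne : (1 - ω ^ s) ≠ 0 := sub_ne_zero.mpr (Ne.symm hωs)
  -- natDegree of each entry ≤ 1
  have hent : ∀ i j : Fin s, (Dmat s ω i j).natDegree ≤ 1 := by
    intro i j
    by_cases h : i = j
    · rw [show Dmat s ω i j = X * C (1 - ω ^ s) from if_pos h]
      exact natDegree_mul_le.trans (by rw [natDegree_X, natDegree_C])
    · rw [show Dmat s ω i j = C (1 - ω ^ (s + (i:ℕ) - (j:ℕ))) from if_neg h]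
      rw [natDegree_C]
      exact Nat.zero_le 1
  have hcoeff : (Dmat s ω).det.coeff s = (1 - ω ^ s) ^ s := by
    rw [Matrix.det_apply, finset_sum_coeff]
    rw [Finset.sum_eq_single (1 : Equiv.Perm (Fin s))]
    · simp only [Equiv.Perm.sign_one, one_smul, Equiv.Perm.one_apply]
      have : (∏ i : Fin s, Dmat s ω i i) = C ((1 - ω ^ s) ^ s) * X ^ s := by
        rw [Finset.prod_congr rfl (fun i _ => show Dmat s ω i i = X * C (1 - ω ^ s) from if_pos rfl)]
        rw [Finset.prod_const, Finset.card_univ, Fintype.card_fin, mul_pow, ← C_pow, mul_comm]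
      rw [this, coeff_C_mul, coeff_X_pow, if_pos rfl, mul_one]
    · intro σ _ hσ
      obtain ⟨i, hi⟩ : ∃ i, σ i ≠ i := by
        by_contra h
        push_neg at h
        exact hσ (Equiv.ext h)
      have hdeg : (∏ j : Fin s, Dmat s ω (σ j) j).natDegree < s := by
        calc (∏ j : Fin s, Dmat s ω (σ j) j).natDegree
            ≤ ∑ j : Fin s, (Dmat s ω (σ j) j).natDegree := natDegree_prod_le _ _
          _ = (Dmat s ω (σ i) i).natDegree
              + ∑ j ∈ Finset.univ.erase i, (Dmat s ω (σ j) j).natDegree := by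
              exact (Finset.add_sum_erase _ _ (Finset.mem_univ i)).symm
          _ ≤ 0 + (Finset.univ.erase i).card * 1 := by
              gcongr
              · rw [show Dmat s ω (σ i) i = C (1 - ω ^ (s + ((σ i):ℕ) - (i:ℕ))) from if_neg hi]
                rw [natDegree_C]
              · exact Finset.sum_le_card_nsmul _ _ 1 (fun j _ => hent _ _)
          _ < s := by
              simp [Finset.card_erase_of_mem, Finset.card_univ]
              omega
      have : (∏ j : Fin s, Dmat s ω (σ j) j).coeff s = 0 :=
        coeff_eq_zero_of_natDegree_lt hdeg
      rw [Polynomial.coeff_smul, this, smul_zero]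
    · simp
  have hne2 : (Dmat s ω).det.coeff s ≠ 0 := by
    rw [hcoeff]; exact pow_ne_zero _ hne
  have hd0 : (Dmat s ω).det ≠ 0 := fun h => hne2 (by simp [h])
  have hge : s ≤ (Dmat s ω).det.natDegree := le_natDegree_of_ne_zero hne2
  have hle : (Dmat s ω).det.natDegree ≤ s := by
    rw [Matrix.det_apply']
    apply Polynomial.natDegree_sum_le_of_forall_le
    intro σ _
    refine natDegree_mul_le.trans ?_
    rw [show ((Equiv.Perm.sign σ : ℤ) : Polynomial F).natDegree = 0 from natDegree_intCast _, zero_add]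
    refine (natDegree_prod_le _ _).trans ?_
    calc ∑ j : Fin s, (Dmat s ω (σ j) j).natDegree
        ≤ ∑ _j : Fin s, 1 := Finset.sum_le_sum (fun j _ => hent _ _)
      _ = s := by simp
  exact ⟨le_antisymm hle hge, hd0⟩
end
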